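/- Let α > 1, ℓ ≥ 0, C₁, C₂, C₃ > 0 with h : ℕ → ℝ satisfying h(n) ≥ 1 and C₁ n^ℓ α^n ≤ h(n) ≤ C₂ n^ℓ α^n for all n ≥ 1. Let λ_S, λ_tot : ℕ → ℝ with 0 ≤ λ_S(n) ≤ λ_tot(n), and suppose for some m₀ ≥ 1, ε₀ > 0, B ≥ 0 and all n in a cofinite set N ⊆ ℕ: λ_tot(n) − λ_S(n) ≤ ε₀ α^{m₀} C₃ h(n−m₀) + B. Then for every ε > 0, the set of n ∈ N with λ_S(n)/h(n) ≤ liminf_{k→∞} λ_tot(k)/h(k) − ε is finite, provided (C₂C₃/C₁)ε₀ < ε. -/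

import Mathlib

open Filter

theorem stmt_5 (α : ℝ) (hα : 1 < α) (ℓ : ℕ) (C₁ C₂ C₃ : ℝ)
    (hC₁ : 0 < C₁) (hC₂ : 0 < C₂) (hC₃ : 0 < C₃)
    (h : ℕ → ℝ) (hone : ∀ n : ℕ, 1 ≤ n → 1 ≤ h n)
    (hbound : ∀ n : ℕ, 1 ≤ n → C₁ * (n : ℝ) ^ ℓ * α ^ n ≤ h n ∧ h n ≤ C₂ * (n : ℝ) ^ ℓ * α ^ n)
    (lamS lamTot : ℕ → ℝ)
    (hS : ∀ n, 0 ≤ lamS n ∧ lamS n ≤ lamTot n)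
    (m₀ : ℕ) (hm₀ : 1 ≤ m₀) (ε₀ : ℝ) (hε₀ : 0 < ε₀) (B : ℝ) (hB : 0 ≤ B)
    (N : Set ℕ) (hN : Nᶜ.Finite)
    (hineq : ∀ n ∈ N, lamTot n - lamS n ≤ ε₀ * α ^ m₀ * C₃ * h (n - m₀) + B)
    (ε : ℝ) (hε : 0 < ε) (hsmall : (C₂ * C₃ / C₁) * ε₀ < ε) :
    {n ∈ N | lamS n / h n ≤
        Filter.liminf (fun k : ℕ => lamTot k / h k) Filter.atTop - ε}.Finite := by
  set L := Filter.liminf (fun k : ℕ => lamTot k / h k) Filter.atTop with hLdef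
  set K := C₂ * C₃ / C₁ * ε₀ with hKdef
  have hα0 : (0 : ℝ) < α := lt_trans one_pos hα
  have hK0 : 0 ≤ K := by positivity
  have hδ : 0 < ε - K := by linarith
  set δ := ε - K with hδdef
  have hposh : ∀ n : ℕ, 1 ≤ n → 0 < h n := fun n hn => lt_of_lt_of_le one_pos (hone n hn)
  -- boundedness below of lamTot/h
  have hbdd : Filter.IsBoundedUnder (· ≥ ·) Filter.atTop (fun k : ℕ => lamTot k / h k) := by
    refine ⟨0, Filter.eventually_map.mpr ?_⟩
    filter_upwards [Filter.eventually_ge_atTop 1] with k hk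
    exact div_nonneg (le_trans (hS k).1 (hS k).2) (hposh k hk).le
  have hA : ∀ᶠ n in atTop, L - δ/2 < lamTot n / h n := by
    apply Filter.eventually_lt_of_lt_liminf _ hbdd
    rw [← hLdef]
    linarith
  -- h n is eventually large
  have htend : Filter.Tendsto (fun n : ℕ => C₁ * α ^ n) atTop atTop :=
    (tendsto_pow_atTop_atTop_of_one_lt hα).const_mul_atTop hC₁
  have hBsmall : ∀ᶠ n in atTop, B / h n ≤ δ/2 := by
    filter_upwards [htend.eventually_ge_atTop (2 * B / δ), Filter.eventually_ge_atTop 1]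
      with n hn h1
    have hn1 : (1:ℝ) ≤ (n:ℝ)^ℓ := one_le_pow₀ (by exact_mod_cast h1)
    have hlow : C₁ * α ^ n ≤ h n := by
      refine le_trans ?_ (hbound n h1).1
      have : C₁ * 1 * α ^ n ≤ C₁ * (n:ℝ)^ℓ * α ^ n := by
        apply mul_le_mul_of_nonneg_right _ (pow_nonneg hα0.le n)
        exact mul_le_mul_of_nonneg_left hn1 hC₁.le
      linarith
    have hhn : 0 < h n := hposh n h1
    rw [div_le_iff₀ hhn]
    have h2B : 2 * B ≤ δ * h n := by
      have := le_trans hn hlow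
      rw [div_le_iff₀ hδ] at this
      nlinarith
    nlinarith
  have main : ∀ᶠ n in atTop, n ∉ {n ∈ N | lamS n / h n ≤ L - ε} := by
    filter_upwards [hA, hBsmall, Filter.eventually_ge_atTop (m₀ + 1)] with n h1 h2 h3
    rintro ⟨hnN, hle⟩
    have hn1 : 1 ≤ n := le_trans (Nat.le_add_left 1 m₀) h3
    have hnm : 1 ≤ n - m₀ := by omega
    have hsplit : (n - m₀) + m₀ = n := by omega
    have hhn : 0 < h n := hposh n hn1
    have hpowle : ((n - m₀ : ℕ) : ℝ) ^ ℓ ≤ (n : ℝ) ^ ℓ :=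
      pow_le_pow_left₀ (by positivity) (Nat.cast_le.mpr (Nat.sub_le n m₀)) ℓ
    have hstep : ε₀ * α ^ m₀ * C₃ * h (n - m₀) ≤ K * h n := by
      have h2' : h (n - m₀) ≤ C₂ * (n : ℝ) ^ ℓ * α ^ (n - m₀) := by
        refine le_trans (hbound (n - m₀) hnm).2 ?_
        exact mul_le_mul_of_nonneg_right (mul_le_mul_of_nonneg_left hpowle hC₂.le)
          (pow_nonneg hα0.le _)
      have h3' : ε₀ * α ^ m₀ * C₃ * h (n - m₀) ≤ ε₀ * C₃ * C₂ * (n : ℝ) ^ ℓ * α ^ n := by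
        calc ε₀ * α ^ m₀ * C₃ * h (n - m₀)
            ≤ ε₀ * α ^ m₀ * C₃ * (C₂ * (n : ℝ) ^ ℓ * α ^ (n - m₀)) := by
              exact mul_le_mul_of_nonneg_left h2' (by positivity)
          _ = ε₀ * C₃ * C₂ * (n : ℝ) ^ ℓ * (α ^ (n - m₀) * α ^ m₀) := by ring
          _ = ε₀ * C₃ * C₂ * (n : ℝ) ^ ℓ * α ^ n := by rw [← pow_add, hsplit]
      have h4' : ε₀ * C₃ * C₂ * (n : ℝ) ^ ℓ * α ^ n = K * (C₁ * (n : ℝ) ^ ℓ * α ^ n) := by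
        rw [hKdef]; field_simp
      have h5' : K * (C₁ * (n : ℝ) ^ ℓ * α ^ n) ≤ K * h n :=
        mul_le_mul_of_nonneg_left (hbound n hn1).1 hK0
      linarith
    have hdiff : lamTot n - lamS n ≤ K * h n + B := le_trans (hineq n hnN) (by linarith)
    have hnum : lamTot n - K * h n - B ≤ lamS n := by linarith
    have e1 : (lamTot n - K * h n - B) / h n = lamTot n / h n - K - B / h n := by
      field_simp
    have hge : lamTot n / h n - K - B / h n ≤ lamS n / h n := by
      rw [← e1]
      gcongr
    have : L - ε < lamS n / h n := by
      have : L - δ/2 - K - δ/2 ≤ lamTot n / h n - K - B / h n := by linarith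
      have heq : L - δ/2 - K - δ/2 = L - ε := by rw [hδdef]; ring
      linarith
    linarith
  rw [← Nat.cofinite_eq_atTop] at main
  have := Filter.eventually_cofinite.mp main
  simpa using this
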